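/- arXiv:1706.09064 — 2 statements merged into one kernel-verified Lean document; each statement's English description precedes it below -/
import Mathlib

section
/- Let ψ be smooth with supp ψ ⊂ {h ∈ R^d : 2^{-2} < |h| < 1} and Σ_{s∈Z} ψ(2^{-s} h) = 1 for all h ≠ 0. For a kernel K define K_s(x, x+h) := K(x, x+h) ψ(2^{-s} h). Then for any bounded measurable truncation functions and any f ∈ L^∞_0, the maximal truncation T_⋆ f(x) := sup_{δ>0} |∫_{δ<|h|<1/δ} K(x, x+h) f(x+h) dh| satisfies the pointwise bound T_⋆ f(x) ≲ M f(x) + T_⋆[K] f(x), where T_⋆[K] f(x) = sup_{t_1 ≤ t_2} |Σ_{t_1 < s ≤ t_2} ∫ K_s(x,y) f(y) dy| and M is the Hardy–Littlewood maximal function, provided K satisfies the size bound |K(x,y)| ≤ |x−y|^{-d}. -/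
open MeasureTheory

noncomputable section

/-- The axis-parallel cube with center `c` and half-sidelength `r`. -/
def cubeSet {d : ℕ} (c : Fin d → ℝ) (r : ℝ) : Set (Fin d → ℝ) :=
  {x | ∀ i, |x i - c i| ≤ r}

/-- The Hardy–Littlewood maximal function (over cubes). -/
noncomputable def maxFn {d : ℕ} (f : (Fin d → ℝ) → ℂ) (x : Fin d → ℝ) : ℝ :=
  sSup {a | ∃ c r, 0 < r ∧ x ∈ cubeSet c r ∧
    a = ((volume (cubeSet c r)).toReal)⁻¹ * ∫ y in cubeSet c r, ‖f y‖}

/-- The maximal truncation of the singular integral with kernel `K`. -/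
noncomputable def maxTrunc {d : ℕ} (K : (Fin d → ℝ) → (Fin d → ℝ) → ℂ)
    (f : (Fin d → ℝ) → ℂ) (x : Fin d → ℝ) : ℝ :=
  sSup {a | ∃ δ : ℝ, 0 < δ ∧
    a = ‖∫ h in {h : Fin d → ℝ | δ < ‖h‖ ∧ ‖h‖ < 1 / δ}, K x (x + h) * f (x + h)‖}

/-- The smoothly truncated dyadic pieces `K_s(x,y) = K(x,y) ψ(2^{-s}(y-x))`. -/
noncomputable def dyadicPiece {d : ℕ} (K : (Fin d → ℝ) → (Fin d → ℝ) → ℂ)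
    (ψ : (Fin d → ℝ) → ℝ) (s : ℤ) (x y : Fin d → ℝ) : ℂ :=
  (ψ ((2 : ℝ) ^ (-s) • (y - x)) : ℂ) * K x y

/-- The maximal truncation associated to the smooth dyadic decomposition. -/
noncomputable def maxTruncDyadic {d : ℕ} (K : (Fin d → ℝ) → (Fin d → ℝ) → ℂ)
    (ψ : (Fin d → ℝ) → ℝ) (f : (Fin d → ℝ) → ℂ) (x : Fin d → ℝ) : ℝ :=
  sSup {a | ∃ t₁ t₂ : ℤ, t₁ ≤ t₂ ∧
    a = ‖∑ s ∈ Finset.Ioc t₁ t₂, ∫ y, dyadicPiece K ψ s x y * f y‖}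


-- ===================== auxiliary lemmas =====================

section Aux
open Metric Set

lemma cubeSet_eq_closedBall {d : ℕ} (c : Fin d → ℝ) (r : ℝ) (hr : 0 ≤ r) :
    cubeSet c r = Metric.closedBall c r := by
  ext x
  simp only [cubeSet, Set.mem_setOf_eq, Metric.mem_closedBall, dist_pi_le_iff hr, Real.dist_eq]

lemma volume_cubeSet {d : ℕ} (c : Fin d → ℝ) (r : ℝ) (hr : 0 ≤ r) :
    volume (cubeSet c r) = ENNReal.ofReal ((2 * r) ^ d) := by
  have : cubeSet c r = Set.univ.pi (fun i => Set.Icc (c i - r) (c i + r)) := by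
    ext x
    simp only [cubeSet, Set.mem_setOf_eq, Set.mem_pi, Set.mem_univ, forall_true_left,
      Set.mem_Icc, abs_sub_le_iff]
    constructor
    · intro h i; have := h i; constructor <;> linarith [this.1, this.2]
    · intro h i; have := h i; constructor <;> linarith [this.1, this.2]
  rw [this, volume_pi_pi]
  have : ∀ i : Fin d, volume (Set.Icc (c i - r) (c i + r)) = ENNReal.ofReal (2 * r) := by
    intro i; rw [Real.volume_Icc]; ring_nf
  rw [Finset.prod_congr rfl (fun i _ => this i), Finset.prod_const, Finset.card_univ,
    Fintype.card_fin, ← ENNReal.ofReal_pow (by linarith)]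

lemma volume_cubeSet_toReal {d : ℕ} (c : Fin d → ℝ) (r : ℝ) (hr : 0 ≤ r) :
    (volume (cubeSet c r)).toReal = (2 * r) ^ d := by
  rw [volume_cubeSet c r hr, ENNReal.toReal_ofReal (by positivity)]

lemma maxFn_nonneg {d : ℕ} (f : (Fin d → ℝ) → ℂ) (x : Fin d → ℝ) : 0 ≤ maxFn f x := by
  apply Real.sSup_nonneg
  rintro a ⟨c, r, hr, hx, rfl⟩
  have : 0 ≤ ∫ y in cubeSet c r, ‖f y‖ := integral_nonneg (fun y => norm_nonneg _)
  positivity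

lemma integrableOn_norm_cube {d : ℕ} {f : (Fin d → ℝ) → ℂ} (hf : Measurable f)
    {M : ℝ} (hM : ∀ x, ‖f x‖ ≤ M) (c : Fin d → ℝ) {r : ℝ} (hr : 0 < r) :
    IntegrableOn (fun y => ‖f y‖) (cubeSet c r) := by
  rw [cubeSet_eq_closedBall c r hr.le]
  apply Measure.integrableOn_of_bounded (M := M)
  · exact (measure_closedBall_lt_top).ne
  · exact (hf.norm).aestronglyMeasurable
  · filter_upwards with y using by simpa using hM y

lemma maxFn_bddAbove {d : ℕ} (f : (Fin d → ℝ) → ℂ) (hf : Measurable f)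
    {M : ℝ} (hM : ∀ x, ‖f x‖ ≤ M) (x : Fin d → ℝ) :
    BddAbove {a | ∃ c r, 0 < r ∧ x ∈ cubeSet c r ∧
      a = ((volume (cubeSet c r)).toReal)⁻¹ * ∫ y in cubeSet c r, ‖f y‖} := by
  have hM0 : 0 ≤ M := le_trans (norm_nonneg _) (hM x)
  refine ⟨M, ?_⟩
  rintro a ⟨c, r, hr, hx, rfl⟩
  have hvol : (volume (cubeSet c r)).toReal = (2 * r) ^ d := volume_cubeSet_toReal c r hr.le
  have hpos : (0:ℝ) < (2 * r) ^ d := by positivity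
  have hint : ∫ y in cubeSet c r, ‖f y‖ ≤ (2 * r) ^ d * M := by
    calc ∫ y in cubeSet c r, ‖f y‖ ≤ ∫ y in cubeSet c r, M := by
          apply setIntegral_mono_on (integrableOn_norm_cube hf hM c hr)
            (integrableOn_const (ne_of_lt ?_)) ?_ (fun y _ => hM y)
          · rw [volume_cubeSet c r hr.le]; exact ENNReal.ofReal_lt_top
          · rw [cubeSet_eq_closedBall c r hr.le]; exact measurableSet_closedBall
      _ = (2 * r) ^ d * M := by rw [setIntegral_const, smul_eq_mul, measureReal_def, hvol]
  rw [hvol]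
  calc ((2 * r) ^ d)⁻¹ * ∫ y in cubeSet c r, ‖f y‖
      ≤ ((2 * r) ^ d)⁻¹ * ((2 * r) ^ d * M) := by
        apply mul_le_mul_of_nonneg_left hint (by positivity)
    _ = M := by field_simp

lemma avg_le_maxFn {d : ℕ} (f : (Fin d → ℝ) → ℂ) (hf : Measurable f)
    {M : ℝ} (hM : ∀ x, ‖f x‖ ≤ M) (x c : Fin d → ℝ) {r : ℝ} (hr : 0 < r)
    (hx : x ∈ cubeSet c r) :
    ((volume (cubeSet c r)).toReal)⁻¹ * (∫ y in cubeSet c r, ‖f y‖) ≤ maxFn f x :=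
  le_csSup (maxFn_bddAbove f hf hM x) ⟨c, r, hr, hx, rfl⟩

variable {d : ℕ} {K : (Fin d → ℝ) → (Fin d → ℝ) → ℂ} {f : (Fin d → ℝ) → ℂ} {M : ℝ}

lemma phi_measurable (hK : Measurable fun q : (Fin d → ℝ) × (Fin d → ℝ) => K q.1 q.2)
    (hf : Measurable f) (x : Fin d → ℝ) :
    Measurable (fun h : Fin d → ℝ => K x (x + h) * f (x + h)) := by
  have h1 : Measurable (fun h : Fin d → ℝ => K x (x + h)) :=
    hK.comp (measurable_const.prodMk (measurable_const.add measurable_id))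
  exact h1.mul (hf.comp (measurable_const.add measurable_id))

lemma K_norm_le (hKsize : ∀ x y : Fin d → ℝ, x ≠ y → ‖K x y‖ ≤ (dist x y) ^ (-(d : ℝ)))
    (x : Fin d → ℝ) {h : Fin d → ℝ} (hh : h ≠ 0) :
    ‖K x (x + h)‖ ≤ (‖h‖ ^ d)⁻¹ := by
  have hne : x ≠ x + h := by
    intro he
    apply hh
    have := congrArg (fun z => z - x) he
    simpa using this.symm
  have := hKsize x (x + h) hne
  rw [dist_self_add_right] at this
  have hpos : (0:ℝ) < ‖h‖ := norm_pos_iff.2 hh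
  calc ‖K x (x + h)‖ ≤ ‖h‖ ^ (-(d:ℝ)) := this
    _ = (‖h‖ ^ d)⁻¹ := by
        rw [Real.rpow_neg hpos.le, Real.rpow_natCast]

lemma phi_norm_le (hKsize : ∀ x y : Fin d → ℝ, x ≠ y → ‖K x y‖ ≤ (dist x y) ^ (-(d : ℝ)))
    (hM : ∀ x, ‖f x‖ ≤ M) (x : Fin d → ℝ) {r : ℝ} (hr : 0 < r)
    {h : Fin d → ℝ} (hh : r ≤ ‖h‖) :
    ‖K x (x + h) * f (x + h)‖ ≤ (r ^ d)⁻¹ * M := by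
  have hh0 : h ≠ 0 := by
    intro he; rw [he, norm_zero] at hh; linarith
  have hK := K_norm_le hKsize x hh0
  have hKb : ‖K x (x + h)‖ ≤ (r ^ d)⁻¹ := by
    refine le_trans hK ?_
    apply inv_anti₀ (by positivity)
    exact pow_le_pow_left₀ hr.le hh d
  rw [norm_mul]
  exact mul_le_mul hKb (hM _) (norm_nonneg _) (by positivity)

lemma meas_annulus (r R : ℝ) : MeasurableSet {h : Fin d → ℝ | r ≤ ‖h‖ ∧ ‖h‖ ≤ R} := by
  apply MeasurableSet.inter
  · exact measurableSet_le measurable_const measurable_norm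
  · exact measurableSet_le measurable_norm measurable_const

lemma annulus_integral_le_maxFn
    (hK : Measurable fun q : (Fin d → ℝ) × (Fin d → ℝ) => K q.1 q.2)
    (hKsize : ∀ x y : Fin d → ℝ, x ≠ y → ‖K x y‖ ≤ (dist x y) ^ (-(d : ℝ)))
    (hf : Measurable f) (hM : ∀ x, ‖f x‖ ≤ M)
    (x : Fin d → ℝ) {r : ℝ} (hr : 0 < r) :
    ∫ h in {h : Fin d → ℝ | r ≤ ‖h‖ ∧ ‖h‖ ≤ 8 * r}, ‖K x (x + h) * f (x + h)‖
      ≤ 16 ^ d * maxFn f x := by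
  have hM0 : 0 ≤ M := le_trans (norm_nonneg _) (hM x)
  set S : Set (Fin d → ℝ) := {h | r ≤ ‖h‖ ∧ ‖h‖ ≤ 8 * r} with hS
  have hSmeas : MeasurableSet S := meas_annulus r (8 * r)
  have hSsub : S ⊆ Metric.closedBall 0 (8 * r) := by
    intro h hh; simpa [Metric.mem_closedBall, dist_zero_right] using hh.2
  have hSfin : volume S ≠ ⊤ :=
    ((measure_mono hSsub).trans_lt measure_closedBall_lt_top).ne
  have hfxm : Measurable (fun h : Fin d → ℝ => ‖f (x + h)‖) :=
    (hf.comp (measurable_const.add measurable_id)).norm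
  have hfInt : IntegrableOn (fun h : Fin d → ℝ => ‖f (x + h)‖) (Metric.closedBall 0 (8*r)) := by
    apply Measure.integrableOn_of_bounded (M := M) measure_closedBall_lt_top.ne
      hfxm.aestronglyMeasurable
    filter_upwards with h using by simpa using hM _
  have hΦInt : IntegrableOn (fun h : Fin d → ℝ => ‖K x (x + h) * f (x + h)‖) S := by
    apply Measure.integrableOn_of_bounded (M := (r ^ d)⁻¹ * M) hSfin
      ((phi_measurable hK hf x).norm).aestronglyMeasurable
    rw [ae_restrict_iff' hSmeas]
    filter_upwards with h hh
    simpa using phi_norm_le hKsize hM x hr hh.1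
  calc ∫ h in S, ‖K x (x + h) * f (x + h)‖
      ≤ ∫ h in S, (r ^ d)⁻¹ * ‖f (x + h)‖ := by
        apply setIntegral_mono_on hΦInt (hfInt.mono_set hSsub |>.const_mul _) hSmeas
        intro h hh
        have hh0 : h ≠ 0 := by
          intro he; have h1 := hh.1; rw [he, norm_zero] at h1; linarith
        have hKb : ‖K x (x + h)‖ ≤ (r ^ d)⁻¹ := by
          refine le_trans (K_norm_le hKsize x hh0) ?_
          apply inv_anti₀ (by positivity)
          exact pow_le_pow_left₀ hr.le hh.1 d
        rw [norm_mul]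
        exact mul_le_mul_of_nonneg_right hKb (norm_nonneg _)
    _ = (r ^ d)⁻¹ * ∫ h in S, ‖f (x + h)‖ := integral_const_mul _ _
    _ ≤ (r ^ d)⁻¹ * ∫ h in Metric.closedBall 0 (8*r), ‖f (x + h)‖ := by
        apply mul_le_mul_of_nonneg_left _ (by positivity)
        apply setIntegral_mono_set hfInt
        · filter_upwards with h using norm_nonneg _
        · exact Filter.Eventually.of_forall hSsub
    _ = (r ^ d)⁻¹ * ∫ y in Metric.closedBall x (8*r), ‖f y‖ := by
        congr 1
        have key : ∀ h : Fin d → ℝ,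
            Set.indicator (Metric.closedBall 0 (8*r)) (fun h => ‖f (x + h)‖) h
              = Set.indicator (Metric.closedBall x (8*r)) (fun y => ‖f y‖) (x + h) := by
          intro h
          have hiff : x + h ∈ Metric.closedBall x (8*r) ↔ h ∈ Metric.closedBall (0 : Fin d → ℝ) (8*r) := by
            simp [Metric.mem_closedBall, dist_zero_right, dist_comm (x+h) x, dist_self_add_right]
          by_cases hmem : h ∈ Metric.closedBall (0 : Fin d → ℝ) (8*r)
          · rw [Set.indicator_of_mem hmem, Set.indicator_of_mem (hiff.mpr hmem)]
          · rw [Set.indicator_of_notMem hmem, Set.indicator_of_notMem (fun c => hmem (hiff.mp c))]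
        rw [← integral_indicator measurableSet_closedBall,
          ← integral_indicator measurableSet_closedBall,
          ← integral_add_left_eq_self
            (Set.indicator (Metric.closedBall x (8*r)) (fun y => ‖f y‖)) x]
        exact integral_congr_ae (Filter.Eventually.of_forall key)
    _ ≤ 16 ^ d * maxFn f x := by
        have h8 : (0:ℝ) ≤ 8 * r := by positivity
        rw [← cubeSet_eq_closedBall x (8*r) h8]
        have havg := avg_le_maxFn f hf hM x x (by positivity : (0:ℝ) < 8*r)
          (by intro i; simpa using h8)
        have hvol : (volume (cubeSet x (8*r))).toReal = (16 * r) ^ d := by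
          rw [volume_cubeSet_toReal x (8*r) h8]; ring_nf
        have hnn : 0 ≤ ∫ y in cubeSet x (8*r), ‖f y‖ :=
          integral_nonneg fun y => norm_nonneg _
        have hkey : ∫ y in cubeSet x (8*r), ‖f y‖ ≤ (16 * r)^d * maxFn f x := by
          have h2 := mul_le_mul_of_nonneg_left havg (le_of_lt (by positivity : (0:ℝ) < (16*r)^d))
          rw [hvol] at h2
          calc ∫ y in cubeSet x (8*r), ‖f y‖
              = (16*r)^d * (((16*r)^d)⁻¹ * ∫ y in cubeSet x (8*r), ‖f y‖) := by
                field_simp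
            _ ≤ (16*r)^d * maxFn f x := h2
        calc (r ^ d)⁻¹ * ∫ y in cubeSet x (8*r), ‖f y‖
            ≤ (r ^ d)⁻¹ * ((16*r)^d * maxFn f x) :=
              mul_le_mul_of_nonneg_left hkey (by positivity)
          _ = 16 ^ d * maxFn f x := by
              rw [mul_pow]
              field_simp

end Aux


section PsiAux

variable {d : ℕ} {ψ : (Fin d → ℝ) → ℝ}

lemma psi_bound (hc : Continuous ψ)
    (hsupp : ∀ h : Fin d → ℝ, ψ h ≠ 0 → (2:ℝ)^(-2:ℤ) < ‖h‖ ∧ ‖h‖ < 1) :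
    ∃ Cψ : ℝ, 0 ≤ Cψ ∧ ∀ h, |ψ h| ≤ Cψ := by
  have hcs : HasCompactSupport ψ := by
    apply HasCompactSupport.of_support_subset_isCompact
      (isCompact_closedBall (0 : Fin d → ℝ) 1)
    intro h hh
    have := (hsupp h hh).2
    simpa [Metric.mem_closedBall, dist_zero_right] using this.le
  obtain ⟨C, hC⟩ := hc.bounded_above_of_compact_support hcs
  exact ⟨max C 0, le_max_right _ _, fun h => le_trans (by simpa using hC h) (le_max_left _ _)⟩

lemma psi_scaled_support
    (hsupp : ∀ h : Fin d → ℝ, ψ h ≠ 0 → (2:ℝ)^(-2:ℤ) < ‖h‖ ∧ ‖h‖ < 1)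
    (s : ℤ) (h : Fin d → ℝ) (hne : ψ ((2:ℝ)^(-s) • h) ≠ 0) :
    (2:ℝ)^(s-2) < ‖h‖ ∧ ‖h‖ < (2:ℝ)^s := by
  have ha : (0:ℝ) < (2:ℝ)^s := zpow_pos (by norm_num) s
  have hnorm : ‖(2:ℝ)^(-s) • h‖ = ((2:ℝ)^s)⁻¹ * ‖h‖ := by
    rw [norm_smul, Real.norm_eq_abs, zpow_neg, abs_of_pos (by positivity)]
  obtain ⟨h1, h2⟩ := hsupp _ hne
  rw [hnorm] at h1 h2
  have e1 : (2:ℝ)^(-2:ℤ) = 1/4 := by norm_num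
  rw [e1] at h1
  have e2 : (2:ℝ)^(s-2) = (2:ℝ)^s / 4 := by
    rw [zpow_sub₀ (by norm_num : (2:ℝ) ≠ 0)]; norm_num
  have hmul : (2:ℝ)^s * ((2:ℝ)^s)⁻¹ = 1 := mul_inv_cancel₀ ha.ne'
  constructor
  · rw [e2]
    nlinarith [h1, ha]
  · nlinarith [h2, ha]

lemma psi_zero (hsupp : ∀ h : Fin d → ℝ, ψ h ≠ 0 → (2:ℝ)^(-2:ℤ) < ‖h‖ ∧ ‖h‖ < 1) :
    ψ 0 = 0 := by
  by_contra hne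
  have := (hsupp 0 hne).1
  simp at this
  have : (0:ℝ) < (2:ℝ)^(-2:ℤ) := zpow_pos (by norm_num) _
  linarith [(hsupp 0 hne).1, this]

/-- the partial sum of the dyadic partition of unity -/
def chiFn (ψ : (Fin d → ℝ) → ℝ) (t₁ t₂ : ℤ) (h : Fin d → ℝ) : ℝ :=
  ∑ s ∈ Finset.Ioc t₁ t₂, ψ ((2:ℝ)^(-s) • h)

lemma chiFn_eq_zero_inner
    (hsupp : ∀ h : Fin d → ℝ, ψ h ≠ 0 → (2:ℝ)^(-2:ℤ) < ‖h‖ ∧ ‖h‖ < 1)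
    {t₁ t₂ : ℤ} {h : Fin d → ℝ} (hh : ‖h‖ ≤ (2:ℝ)^(t₁-1)) :
    chiFn ψ t₁ t₂ h = 0 := by
  apply Finset.sum_eq_zero
  intro s hs
  by_contra hne
  have hsup := (psi_scaled_support hsupp s h hne).1
  have hle : (2:ℝ)^(t₁-1) ≤ (2:ℝ)^(s-2) := by
    apply zpow_le_zpow_right₀ (by norm_num)
    have := (Finset.mem_Ioc.mp hs).1
    omega
  linarith

lemma chiFn_eq_zero_outer
    (hsupp : ∀ h : Fin d → ℝ, ψ h ≠ 0 → (2:ℝ)^(-2:ℤ) < ‖h‖ ∧ ‖h‖ < 1)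
    {t₁ t₂ : ℤ} {h : Fin d → ℝ} (hh : (2:ℝ)^t₂ ≤ ‖h‖) :
    chiFn ψ t₁ t₂ h = 0 := by
  apply Finset.sum_eq_zero
  intro s hs
  by_contra hne
  have hsup := (psi_scaled_support hsupp s h hne).2
  have hle : (2:ℝ)^s ≤ (2:ℝ)^t₂ :=
    zpow_le_zpow_right₀ (by norm_num) (Finset.mem_Ioc.mp hs).2
  linarith

lemma chiFn_eq_one
    (hsupp : ∀ h : Fin d → ℝ, ψ h ≠ 0 → (2:ℝ)^(-2:ℤ) < ‖h‖ ∧ ‖h‖ < 1)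
    (hsum : ∀ h : Fin d → ℝ, h ≠ 0 → ∑' s : ℤ, ψ ((2 : ℝ) ^ (-s) • h) = 1)
    {t₁ t₂ : ℤ} {h : Fin d → ℝ} (h1 : (2:ℝ)^t₁ ≤ ‖h‖) (h2 : ‖h‖ ≤ (2:ℝ)^(t₂-1)) :
    chiFn ψ t₁ t₂ h = 1 := by
  have hpos : (0:ℝ) < ‖h‖ := lt_of_lt_of_le (zpow_pos (by norm_num) t₁) h1
  have hne : h ≠ 0 := by
    intro he; rw [he, norm_zero] at hpos; exact lt_irrefl _ hpos
  rw [chiFn, ← hsum h hne]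
  apply (tsum_eq_sum _).symm
  intro b hb
  rw [Finset.mem_Ioc, not_and_or] at hb
  by_contra hne'
  obtain ⟨hs1, hs2⟩ := psi_scaled_support hsupp b h hne'
  rcases hb with hb | hb
  · push_neg at hb
    have : (2:ℝ)^b ≤ (2:ℝ)^t₁ := zpow_le_zpow_right₀ (by norm_num) hb
    linarith
  · push_neg at hb
    have : (2:ℝ)^(t₂-1) ≤ (2:ℝ)^(b-2) := by
      apply zpow_le_zpow_right₀ (by norm_num); omega
    linarith

lemma chiFn_abs_le
    (hsupp : ∀ h : Fin d → ℝ, ψ h ≠ 0 → (2:ℝ)^(-2:ℤ) < ‖h‖ ∧ ‖h‖ < 1)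
    {Cψ : ℝ} (hCψ : 0 ≤ Cψ) (hCb : ∀ h, |ψ h| ≤ Cψ)
    (t₁ t₂ : ℤ) (h : Fin d → ℝ) :
    |chiFn ψ t₁ t₂ h| ≤ 2 * Cψ := by
  by_cases hne : h = 0
  · subst hne
    have : chiFn ψ t₁ t₂ 0 = 0 := by
      apply Finset.sum_eq_zero
      intro s _
      rw [smul_zero]
      exact psi_zero hsupp
    rw [this, abs_zero]; linarith
  · have hpos : (0:ℝ) < ‖h‖ := norm_pos_iff.2 hne
    set k := Int.log 2 ‖h‖ with hk
    have hk1 : (2:ℝ)^k ≤ ‖h‖ := by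
      have := Int.zpow_log_le_self (b := 2) (by norm_num) hpos
      simpa using this
    have hk2 : ‖h‖ < (2:ℝ)^(k+1) := by
      have := Int.lt_zpow_succ_log_self (b := 2) (by norm_num) ‖h‖
      simpa using this
    have hsub : chiFn ψ t₁ t₂ h
        = ∑ s ∈ Finset.Ioc t₁ t₂ ∩ Finset.Icc (k+1) (k+2), ψ ((2:ℝ)^(-s) • h) := by
      apply (Finset.sum_subset Finset.inter_subset_left _).symm
      intro s hs hns
      by_contra hne'
      obtain ⟨hs1, hs2⟩ := psi_scaled_support hsupp s h hne'
      apply hns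
      rw [Finset.mem_inter, Finset.mem_Icc]
      refine ⟨hs, ?_, ?_⟩
      · have : (2:ℝ)^k < (2:ℝ)^s := lt_of_le_of_lt hk1 hs2
        have := (zpow_lt_zpow_iff_right₀ (by norm_num : (1:ℝ) < 2)).mp this
        omega
      · have : (2:ℝ)^(s-2) < (2:ℝ)^(k+1) := lt_trans hs1 hk2
        have := (zpow_lt_zpow_iff_right₀ (by norm_num : (1:ℝ) < 2)).mp this
        omega
    rw [hsub]
    calc |∑ s ∈ Finset.Ioc t₁ t₂ ∩ Finset.Icc (k+1) (k+2), ψ ((2:ℝ)^(-s) • h)|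
        ≤ ∑ s ∈ Finset.Ioc t₁ t₂ ∩ Finset.Icc (k+1) (k+2), |ψ ((2:ℝ)^(-s) • h)| :=
          Finset.abs_sum_le_sum_abs _ _
      _ ≤ ∑ _s ∈ Finset.Ioc t₁ t₂ ∩ Finset.Icc (k+1) (k+2), Cψ :=
          Finset.sum_le_sum (fun s _ => hCb _)
      _ = (Finset.Ioc t₁ t₂ ∩ Finset.Icc (k+1) (k+2)).card * Cψ := by
          rw [Finset.sum_const, nsmul_eq_mul]
      _ ≤ 2 * Cψ := by
          apply mul_le_mul_of_nonneg_right _ hCψ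
          have hcard : (Finset.Ioc t₁ t₂ ∩ Finset.Icc (k+1) (k+2)).card
              ≤ (Finset.Icc (k+1) (k+2)).card :=
            Finset.card_le_card Finset.inter_subset_right
          rw [Int.card_Icc] at hcard
          have : ((k+2) + 1 - (k+1)).toNat = 2 := by omega
          rw [this] at hcard
          exact_mod_cast hcard

lemma integrable_cutoff {u : (Fin d → ℝ) → ℂ} (hu : Measurable u)
    {r R C : ℝ} (hC : 0 ≤ C)
    (hsupp : ∀ h, u h ≠ 0 → r ≤ ‖h‖)
    (hb : ∀ h, r ≤ ‖h‖ → ‖u h‖ ≤ C)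
    (hz : ∀ h, R ≤ ‖h‖ → u h = 0) :
    Integrable u := by
  apply Integrable.mono' (g := Set.indicator (Metric.closedBall 0 R) (fun _ => C))
  · rw [integrable_indicator_iff measurableSet_closedBall]
    exact integrableOn_const measure_closedBall_lt_top.ne
  · exact hu.aestronglyMeasurable
  · filter_upwards with h
    by_cases hmem : h ∈ Metric.closedBall (0 : Fin d → ℝ) R
    · rw [Set.indicator_of_mem hmem]
      rcases le_or_gt r ‖h‖ with hle | hlt
      · exact hb h hle
      · have hz' : u h = 0 := by
          by_contra hne; exact absurd (hsupp h hne) (not_le.2 hlt)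
        simp [hz', hC]
    · rw [Set.indicator_of_notMem hmem]
      have : u h = 0 := by
        apply hz
        simp only [Metric.mem_closedBall, dist_zero_right, not_le] at hmem
        exact hmem.le
      simp [this]

lemma discrepancy_pointwise
    (hsupp : ∀ h : Fin d → ℝ, ψ h ≠ 0 → (2:ℝ)^(-2:ℤ) < ‖h‖ ∧ ‖h‖ < 1)
    (hsum : ∀ h : Fin d → ℝ, h ≠ 0 → ∑' s : ℤ, ψ ((2 : ℝ) ^ (-s) • h) = 1)
    (hCψ : 0 ≤ Cψ) (hCb : ∀ h, |ψ h| ≤ Cψ)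
    {t₁ t₂ : ℤ} {V : Set (Fin d → ℝ)}
    (hV1 : ∀ h : Fin d → ℝ, (2:ℝ)^t₁ < ‖h‖ → ‖h‖ < (2:ℝ)^(t₂-1) → h ∈ V)
    (hV2 : ∀ h : Fin d → ℝ, h ∈ V → (2:ℝ)^(t₁-1) < ‖h‖ ∧ ‖h‖ < (2:ℝ)^t₂)
    (Φ : (Fin d → ℝ) → ℂ) (h : Fin d → ℝ) :
    ‖Set.indicator V Φ h - (chiFn ψ t₁ t₂ h : ℂ) * Φ h‖
      ≤ (1 + 2*Cψ) * (Set.indicator {h' : Fin d → ℝ | (2:ℝ)^(t₁-1) ≤ ‖h'‖ ∧ ‖h'‖ ≤ (2:ℝ)^t₁}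
            (fun h' => ‖Φ h'‖) h
          + Set.indicator {h' : Fin d → ℝ | (2:ℝ)^(t₂-1) ≤ ‖h'‖ ∧ ‖h'‖ ≤ (2:ℝ)^t₂}
            (fun h' => ‖Φ h'‖) h) := by
  have hind1 : 0 ≤ Set.indicator {h' : Fin d → ℝ | (2:ℝ)^(t₁-1) ≤ ‖h'‖ ∧ ‖h'‖ ≤ (2:ℝ)^t₁}
      (fun h' => ‖Φ h'‖) h := Set.indicator_nonneg (fun _ _ => norm_nonneg _) h
  have hind2 : 0 ≤ Set.indicator {h' : Fin d → ℝ | (2:ℝ)^(t₂-1) ≤ ‖h'‖ ∧ ‖h'‖ ≤ (2:ℝ)^t₂}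
      (fun h' => ‖Φ h'‖) h := Set.indicator_nonneg (fun _ _ => norm_nonneg _) h
  have hC1 : (0:ℝ) ≤ 1 + 2*Cψ := by linarith
  -- generic bound used in the two shell cases
  have generic : ‖Set.indicator V Φ h - (chiFn ψ t₁ t₂ h : ℂ) * Φ h‖ ≤ (1 + 2*Cψ) * ‖Φ h‖ := by
    refine le_trans (norm_sub_le _ _) ?_
    have e1 : ‖Set.indicator V Φ h‖ ≤ ‖Φ h‖ := by
      by_cases hm : h ∈ V
      · rw [Set.indicator_of_mem hm]
      · rw [Set.indicator_of_notMem hm]; simp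
    have e2 : ‖(chiFn ψ t₁ t₂ h : ℂ) * Φ h‖ ≤ 2*Cψ * ‖Φ h‖ := by
      rw [norm_mul, Complex.norm_real, Real.norm_eq_abs]
      exact mul_le_mul_of_nonneg_right (chiFn_abs_le hsupp hCψ hCb t₁ t₂ h) (norm_nonneg _)
    nlinarith [norm_nonneg (Φ h)]
  rcases le_or_gt ‖h‖ ((2:ℝ)^(t₁-1)) with hc1 | hc1
  · -- inner zero region
    have hnm : h ∉ V := fun hm => absurd (hV2 h hm).1 (not_lt.2 hc1)
    rw [Set.indicator_of_notMem hnm, chiFn_eq_zero_inner hsupp hc1]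
    simpa using by positivity
  rcases le_or_gt ‖h‖ ((2:ℝ)^t₁) with hc2 | hc2
  · -- first shell
    have hmem : h ∈ {h' : Fin d → ℝ | (2:ℝ)^(t₁-1) ≤ ‖h'‖ ∧ ‖h'‖ ≤ (2:ℝ)^t₁} := ⟨hc1.le, hc2⟩
    rw [Set.indicator_of_mem hmem]
    refine le_trans generic ?_
    have : (1 + 2*Cψ) * ‖Φ h‖ ≤ (1 + 2*Cψ) * (‖Φ h‖ + _) :=
      mul_le_mul_of_nonneg_left (le_add_of_nonneg_right hind2) hC1
    exact this
  rcases lt_or_ge ‖h‖ ((2:ℝ)^(t₂-1)) with hc3 | hc3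
  · -- middle region
    have hm : h ∈ V := hV1 h hc2 hc3
    rw [Set.indicator_of_mem hm, chiFn_eq_one hsupp hsum hc2.le hc3.le]
    simp only [Complex.ofReal_one, one_mul, sub_self, norm_zero]
    positivity
  rcases le_or_gt ‖h‖ ((2:ℝ)^t₂) with hc4 | hc4
  · -- second shell
    have hmem : h ∈ {h' : Fin d → ℝ | (2:ℝ)^(t₂-1) ≤ ‖h'‖ ∧ ‖h'‖ ≤ (2:ℝ)^t₂} := ⟨hc3, hc4⟩
    rw [Set.indicator_of_mem hmem]
    refine le_trans generic ?_
    calc (1 + 2*Cψ) * ‖Φ h‖ ≤ (1 + 2*Cψ) * (_ + ‖Φ h‖) :=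
      mul_le_mul_of_nonneg_left (le_add_of_nonneg_left hind1) hC1
    _ = _ := rfl
  · -- outer zero region
    have hnm : h ∉ V := fun hm => absurd (hV2 h hm).2 (not_lt.2 hc4.le)
    rw [Set.indicator_of_notMem hnm, chiFn_eq_zero_outer hsupp hc4.le]
    simpa using by positivity


end PsiAux

/-- For a kernel with size bound `|K(x,y)| ≤ |x-y|^{-d}` and a smooth dyadic partition of
unity `ψ`, the sharp maximal truncation is pointwise dominated by
`C (M f + T_⋆[K] f)`. -/
theorem stmt8 {d : ℕ} (hd : 0 < d) (ψ : (Fin d → ℝ) → ℝ)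
    (hψsmooth : ContDiff ℝ (⊤ : ℕ∞) ψ)
    (hψsupp : ∀ h : Fin d → ℝ, ψ h ≠ 0 → (2 : ℝ) ^ (-2 : ℤ) < ‖h‖ ∧ ‖h‖ < 1)
    (hψsum : ∀ h : Fin d → ℝ, h ≠ 0 → ∑' s : ℤ, ψ ((2 : ℝ) ^ (-s) • h) = 1) :
    ∃ C : ℝ, 0 < C ∧
      ∀ (K : (Fin d → ℝ) → (Fin d → ℝ) → ℂ),
        (Measurable fun q : (Fin d → ℝ) × (Fin d → ℝ) => K q.1 q.2) →
        (∀ x y : Fin d → ℝ, x ≠ y → ‖K x y‖ ≤ (dist x y) ^ (-(d : ℝ))) →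
        ∀ (f : (Fin d → ℝ) → ℂ), Measurable f → (∃ M, ∀ x, ‖f x‖ ≤ M) →
          HasCompactSupport f →
          ∀ x, maxTrunc K f x ≤ C * (maxFn f x + maxTruncDyadic K ψ f x) := by
  classical
  have hnontriv : Nontrivial (Fin d → ℝ) := by
    refine ⟨⟨0, fun _ => 1, fun hcon => ?_⟩⟩
    have := congrFun hcon ⟨0, hd⟩
    norm_num at this
  obtain ⟨Cψ, hCψ0, hCb⟩ := psi_bound hψsmooth.continuous hψsupp
  refine ⟨2 * (1 + 2*Cψ) * 16^d + 1, by positivity, ?_⟩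
  set C₁ : ℝ := 2 * (1 + 2*Cψ) * 16^d with hC₁def
  have hC₁0 : 0 ≤ C₁ := by positivity
  rintro K hKmeas hKsize f hfmeas ⟨M, hM⟩ hfsupp x
  have hM0 : 0 ≤ M := le_trans (norm_nonneg _) (hM x)
  have hmF0 : 0 ≤ maxFn f x := maxFn_nonneg f x
  have hmD0 : 0 ≤ maxTruncDyadic K ψ f x := by
    apply Real.sSup_nonneg; rintro a ⟨t₁, t₂, -, rfl⟩; exact norm_nonneg _
  have hRHS0 : 0 ≤ (C₁ + 1) * (maxFn f x + maxTruncDyadic K ψ f x) := by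
    apply mul_nonneg (by linarith) (by linarith)
  unfold maxTrunc
  set Φ : (Fin d → ℝ) → ℂ := fun h => K x (x + h) * f (x + h) with hΦdef
  have hΦm : Measurable Φ := phi_measurable hKmeas hfmeas x
  -- support radius
  obtain ⟨R₀, hR₀⟩ : ∃ R₀ : ℝ, tsupport f ⊆ Metric.closedBall 0 R₀ := by
    obtain ⟨R₀, hR₀⟩ := (hfsupp.isBounded).subset_closedBall 0
    exact ⟨R₀, hR₀⟩
  set R₁ : ℝ := R₀ + ‖x‖ + 1 with hR₁def
  have hΦz : ∀ h : Fin d → ℝ, R₁ ≤ ‖h‖ → Φ h = 0 := by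
    intro h hh
    have hfz : f (x + h) = 0 := by
      by_contra hne
      have hmem : x + h ∈ tsupport f := subset_closure (Function.mem_support.2 hne)
      have h1 := hR₀ hmem
      simp only [Metric.mem_closedBall, dist_zero_right] at h1
      have h2 : ‖h‖ ≤ ‖x + h‖ + ‖x‖ := by
        calc ‖h‖ = ‖(x + h) - x‖ := by rw [add_sub_cancel_left]
          _ ≤ ‖x + h‖ + ‖x‖ := norm_sub_le _ _
      rw [hR₁def] at hh
      linarith
    simp only [hΦdef, hfz, mul_zero]
  have hΦb : ∀ r : ℝ, 0 < r → ∀ h : Fin d → ℝ, r ≤ ‖h‖ → ‖Φ h‖ ≤ (r^d)⁻¹ * M :=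
    fun r hr h hh => phi_norm_le hKsize hM x hr hh
  -- integrability on sets away from origin
  have hIntOn : ∀ r : ℝ, 0 < r → ∀ S : Set (Fin d → ℝ), MeasurableSet S →
      (∀ h ∈ S, r ≤ ‖h‖) → IntegrableOn Φ S := by
    intro r hr S hSm hSsub
    rw [← integrable_indicator_iff hSm]
    apply integrable_cutoff (hΦm.indicator hSm) (C := (r^d)⁻¹ * M) (by positivity)
      (r := r) (R := R₁)
    · intro h hne
      by_cases hm : h ∈ S
      · exact hSsub h hm
      · rw [Set.indicator_of_notMem hm] at hne; exact absurd rfl hne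
    · intro h hh
      by_cases hm : h ∈ S
      · rw [Set.indicator_of_mem hm]; exact hΦb r hr h hh
      · rw [Set.indicator_of_notMem hm]; simp only [norm_zero]; positivity
    · intro h hh
      by_cases hm : h ∈ S
      · rw [Set.indicator_of_mem hm]; exact hΦz h hh
      · rw [Set.indicator_of_notMem hm]
  have hmeasLtLt : ∀ p q : ℝ, MeasurableSet {h : Fin d → ℝ | p < ‖h‖ ∧ ‖h‖ < q} :=
    fun p q => (measurableSet_lt measurable_const measurable_norm).inter
      (measurableSet_lt measurable_norm measurable_const)
  have hmeasLeLt : ∀ p q : ℝ, MeasurableSet {h : Fin d → ℝ | p ≤ ‖h‖ ∧ ‖h‖ < q} :=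
    fun p q => (measurableSet_le measurable_const measurable_norm).inter
      (measurableSet_lt measurable_norm measurable_const)
  -- shell bound via maximal function
  have hshell : ∀ t : ℤ,
      (∫ h in {h : Fin d → ℝ | (2:ℝ)^(t-1) ≤ ‖h‖ ∧ ‖h‖ ≤ (2:ℝ)^t}, ‖Φ h‖)
        ≤ 16^d * maxFn f x := by
    intro t
    have hr : (0:ℝ) < (2:ℝ)^(t-1) := zpow_pos (by norm_num) _
    have h2t : (2:ℝ)^t = 2 * (2:ℝ)^(t-1) := by
      rw [← zpow_one_add₀ (by norm_num : (2:ℝ) ≠ 0)]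
      congr 1; ring
    have hsub : {h : Fin d → ℝ | (2:ℝ)^(t-1) ≤ ‖h‖ ∧ ‖h‖ ≤ (2:ℝ)^t} ⊆
        {h : Fin d → ℝ | (2:ℝ)^(t-1) ≤ ‖h‖ ∧ ‖h‖ ≤ 8 * (2:ℝ)^(t-1)} := by
      intro h hh
      refine ⟨hh.1, le_trans hh.2 ?_⟩
      rw [h2t]; nlinarith [hr]
    calc (∫ h in {h : Fin d → ℝ | (2:ℝ)^(t-1) ≤ ‖h‖ ∧ ‖h‖ ≤ (2:ℝ)^t}, ‖Φ h‖)
        ≤ ∫ h in {h : Fin d → ℝ | (2:ℝ)^(t-1) ≤ ‖h‖ ∧ ‖h‖ ≤ 8 * (2:ℝ)^(t-1)}, ‖Φ h‖ := by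
          apply setIntegral_mono_set
          · exact (hIntOn ((2:ℝ)^(t-1)) hr _ (meas_annulus _ _) (fun h hh => hh.1)).norm
          · filter_upwards with h using norm_nonneg _
          · exact Filter.Eventually.of_forall hsub
      _ ≤ 16^d * maxFn f x := annulus_integral_le_maxFn hKmeas hKsize hfmeas hM x hr
  -- integrability of the smooth pieces
  have hIψs : ∀ s : ℤ, Integrable (fun h : Fin d → ℝ => (ψ ((2:ℝ)^(-s) • h) : ℂ) * Φ h) := by
    intro s
    have hr : (0:ℝ) < (2:ℝ)^(s-2) := zpow_pos (by norm_num) _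
    apply integrable_cutoff (r := (2:ℝ)^(s-2)) (R := R₁)
      (C := Cψ * (((2:ℝ)^(s-2))^d)⁻¹ * M)
    · have hψm : Measurable ψ := hψsmooth.continuous.measurable
      have h1 : Measurable fun h : Fin d → ℝ => (ψ ((2:ℝ)^(-s) • h) : ℂ) := by fun_prop
      exact h1.mul hΦm
    · positivity
    · intro h hne
      have hψne : ψ ((2:ℝ)^(-s) • h) ≠ 0 := by
        intro h0; apply hne; rw [h0]; simp
      exact (psi_scaled_support hψsupp s h hψne).1.le
    · intro h hh
      rw [norm_mul, Complex.norm_real, Real.norm_eq_abs]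
      calc |ψ ((2:ℝ)^(-s) • h)| * ‖Φ h‖
          ≤ Cψ * ((((2:ℝ)^(s-2))^d)⁻¹ * M) :=
            mul_le_mul (hCb _) (hΦb _ hr h hh) (norm_nonneg _) hCψ0
        _ = Cψ * (((2:ℝ)^(s-2))^d)⁻¹ * M := by ring
    · intro h hh; rw [hΦz h hh, mul_zero]
  have hchi_expand : ∀ t₁ t₂ : ℤ, (fun h : Fin d → ℝ => (chiFn ψ t₁ t₂ h : ℂ) * Φ h)
      = fun h => ∑ s ∈ Finset.Ioc t₁ t₂, (ψ ((2:ℝ)^(-s) • h) : ℂ) * Φ h := by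
    intro t₁ t₂
    funext h
    rw [chiFn]
    push_cast
    rw [Finset.sum_mul]
  have hIχ : ∀ t₁ t₂ : ℤ, Integrable (fun h : Fin d → ℝ => (chiFn ψ t₁ t₂ h : ℂ) * Φ h) := by
    intro t₁ t₂
    rw [hchi_expand t₁ t₂]
    exact integrable_finset_sum _ (fun s _ => hIψs s)
  -- dyadic sum identity
  have hDyadEq : ∀ t₁ t₂ : ℤ,
      (∑ s ∈ Finset.Ioc t₁ t₂, ∫ y, dyadicPiece K ψ s x y * f y)
        = ∫ h, (chiFn ψ t₁ t₂ h : ℂ) * Φ h := by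
    intro t₁ t₂
    have hterm : ∀ s : ℤ, (∫ y, dyadicPiece K ψ s x y * f y)
        = ∫ h, (ψ ((2:ℝ)^(-s) • h) : ℂ) * Φ h := by
      intro s
      rw [← integral_add_left_eq_self (fun y => dyadicPiece K ψ s x y * f y) x]
      apply integral_congr_ae
      filter_upwards with h
      simp only [dyadicPiece, add_sub_cancel_left, hΦdef]
      ring
    rw [Finset.sum_congr rfl (fun s _ => hterm s), ← integral_finset_sum _ (fun s _ => hIψs s),
      hchi_expand t₁ t₂]
  -- discrepancy integral bound
  have hDisc : ∀ t₁ t₂ : ℤ, ∀ V : Set (Fin d → ℝ), MeasurableSet V →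
      (∀ h : Fin d → ℝ, (2:ℝ)^t₁ < ‖h‖ → ‖h‖ < (2:ℝ)^(t₂-1) → h ∈ V) →
      (∀ h : Fin d → ℝ, h ∈ V → (2:ℝ)^(t₁-1) < ‖h‖ ∧ ‖h‖ < (2:ℝ)^t₂) →
      ‖(∫ h, Set.indicator V Φ h) - ∫ h, (chiFn ψ t₁ t₂ h : ℂ) * Φ h‖
        ≤ C₁ * maxFn f x := by
    intro t₁ t₂ V hVm hV1 hV2
    have hIV : Integrable (V.indicator Φ) := by
      rw [integrable_indicator_iff hVm]
      exact hIntOn ((2:ℝ)^(t₁-1)) (zpow_pos (by norm_num) _) V hVm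
        (fun h hh => (hV2 h hh).1.le)
    have hB1m : MeasurableSet {h' : Fin d → ℝ | (2:ℝ)^(t₁-1) ≤ ‖h'‖ ∧ ‖h'‖ ≤ (2:ℝ)^t₁} :=
      meas_annulus _ _
    have hB2m : MeasurableSet {h' : Fin d → ℝ | (2:ℝ)^(t₂-1) ≤ ‖h'‖ ∧ ‖h'‖ ≤ (2:ℝ)^t₂} :=
      meas_annulus _ _
    have hIB1 : Integrable (Set.indicator
        {h' : Fin d → ℝ | (2:ℝ)^(t₁-1) ≤ ‖h'‖ ∧ ‖h'‖ ≤ (2:ℝ)^t₁} (fun h' => ‖Φ h'‖)) := by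
      rw [integrable_indicator_iff hB1m]
      exact (hIntOn ((2:ℝ)^(t₁-1)) (zpow_pos (by norm_num) _) _ hB1m (fun h hh => hh.1)).norm
    have hIB2 : Integrable (Set.indicator
        {h' : Fin d → ℝ | (2:ℝ)^(t₂-1) ≤ ‖h'‖ ∧ ‖h'‖ ≤ (2:ℝ)^t₂} (fun h' => ‖Φ h'‖)) := by
      rw [integrable_indicator_iff hB2m]
      exact (hIntOn ((2:ℝ)^(t₂-1)) (zpow_pos (by norm_num) _) _ hB2m (fun h hh => hh.1)).norm
    rw [← integral_sub hIV (hIχ t₁ t₂)]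
    refine le_trans (norm_integral_le_integral_norm _) ?_
    calc (∫ h, ‖V.indicator Φ h - (chiFn ψ t₁ t₂ h : ℂ) * Φ h‖)
        ≤ ∫ h, (1 + 2*Cψ) *
            (Set.indicator {h' : Fin d → ℝ | (2:ℝ)^(t₁-1) ≤ ‖h'‖ ∧ ‖h'‖ ≤ (2:ℝ)^t₁}
              (fun h' => ‖Φ h'‖) h
           + Set.indicator {h' : Fin d → ℝ | (2:ℝ)^(t₂-1) ≤ ‖h'‖ ∧ ‖h'‖ ≤ (2:ℝ)^t₂}
              (fun h' => ‖Φ h'‖) h) := by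
          apply integral_mono ((hIV.sub (hIχ t₁ t₂)).norm) (((hIB1.add hIB2).const_mul _))
          intro h
          exact discrepancy_pointwise hψsupp hψsum hCψ0 hCb hV1 hV2 Φ h
      _ = (1 + 2*Cψ) *
            ((∫ h in {h' : Fin d → ℝ | (2:ℝ)^(t₁-1) ≤ ‖h'‖ ∧ ‖h'‖ ≤ (2:ℝ)^t₁}, ‖Φ h‖)
             + ∫ h in {h' : Fin d → ℝ | (2:ℝ)^(t₂-1) ≤ ‖h'‖ ∧ ‖h'‖ ≤ (2:ℝ)^t₂}, ‖Φ h‖) := by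
          rw [integral_const_mul, integral_add hIB1 hIB2,
            integral_indicator hB1m, integral_indicator hB2m]
      _ ≤ (1 + 2*Cψ) * (16^d * maxFn f x + 16^d * maxFn f x) := by
          apply mul_le_mul_of_nonneg_left (add_le_add (hshell t₁) (hshell t₂)) (by linarith)
      _ = C₁ * maxFn f x := by rw [hC₁def]; ring
  -- done with prep; now case on boundedness
  by_cases hTb : BddAbove {a | ∃ δ : ℝ, 0 < δ ∧
      a = ‖∫ h in {h : Fin d → ℝ | δ < ‖h‖ ∧ ‖h‖ < 1 / δ}, Φ h‖}
  · obtain ⟨T, hT⟩ := hTb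
    set T' : ℝ := max T 0 with hT'def
    have hT'0 : 0 ≤ T' := le_max_right _ _
    have hST : ∀ δ : ℝ, 0 < δ →
        ‖∫ h in {h : Fin d → ℝ | δ < ‖h‖ ∧ ‖h‖ < 1 / δ}, Φ h‖ ≤ T' := by
      intro δ hδ
      exact le_trans (hT ⟨δ, hδ, rfl⟩) (le_max_left _ _)
    -- J : outer tail integral
    have hmeas1 : MeasurableSet {h : Fin d → ℝ | 1 ≤ ‖h‖} :=
      measurableSet_le measurable_const measurable_norm
    have hJint : IntegrableOn Φ {h : Fin d → ℝ | 1 ≤ ‖h‖} :=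
      hIntOn 1 one_pos _ hmeas1 (fun h hh => hh)
    set J : ℝ := ∫ h in {h : Fin d → ℝ | 1 ≤ ‖h‖}, ‖Φ h‖ with hJdef
    have hJ0 : 0 ≤ J := integral_nonneg fun h => norm_nonneg _
    have hJtail : ∀ S : Set (Fin d → ℝ), MeasurableSet S → (∀ h ∈ S, 1 ≤ ‖h‖) →
        ‖∫ h in S, Φ h‖ ≤ J := by
      intro S hSm hSsub
      refine le_trans (norm_integral_le_integral_norm _) ?_
      rw [hJdef]
      apply setIntegral_mono_set hJint.norm
      · filter_upwards with h using norm_nonneg _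
      · exact Filter.Eventually.of_forall hSsub
    -- general annulus bound
    have hSA : ∀ a b : ℝ, 0 < a →
        ‖∫ h in {h : Fin d → ℝ | a < ‖h‖ ∧ ‖h‖ < b}, Φ h‖ ≤ 2*T' + 2*J := by
      intro a b ha
      rcases le_or_gt b a with hba | hab
      · have hempty : {h : Fin d → ℝ | a < ‖h‖ ∧ ‖h‖ < b} = ∅ := by
          ext h
          simp only [Set.mem_setOf_eq, Set.mem_empty_iff_false, iff_false, not_and, not_lt]
          intro h1; linarith
        rw [hempty, setIntegral_empty, norm_zero]; linarith
      -- a < b : split at radius 1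
      have hP1m : MeasurableSet {h : Fin d → ℝ | a < ‖h‖ ∧ ‖h‖ < min b 1} := hmeasLtLt a _
      have hP2m : MeasurableSet {h : Fin d → ℝ | (a < ‖h‖ ∧ ‖h‖ < b) ∧ 1 ≤ ‖h‖} :=
        (hmeasLtLt a b).inter (measurableSet_le measurable_const measurable_norm)
      have hsplit : {h : Fin d → ℝ | a < ‖h‖ ∧ ‖h‖ < b}
          = {h : Fin d → ℝ | a < ‖h‖ ∧ ‖h‖ < min b 1}
            ∪ {h : Fin d → ℝ | (a < ‖h‖ ∧ ‖h‖ < b) ∧ 1 ≤ ‖h‖} := by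
        ext h
        simp only [Set.mem_setOf_eq, Set.mem_union, lt_min_iff]
        constructor
        · rintro ⟨h1, h2⟩
          rcases lt_or_ge ‖h‖ 1 with hc | hc
          · exact Or.inl ⟨h1, h2, hc⟩
          · exact Or.inr ⟨⟨h1, h2⟩, hc⟩
        · rintro (⟨h1, h2, _⟩ | ⟨⟨h1, h2⟩, _⟩) <;> exact ⟨h1, h2⟩
      have hIP1 : IntegrableOn Φ {h : Fin d → ℝ | a < ‖h‖ ∧ ‖h‖ < min b 1} :=
        hIntOn a ha _ hP1m (fun h hh => hh.1.le)
      have hIP2 : IntegrableOn Φ {h : Fin d → ℝ | (a < ‖h‖ ∧ ‖h‖ < b) ∧ 1 ≤ ‖h‖} :=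
        hIntOn a ha _ hP2m (fun h hh => hh.1.1.le)
      have hdisj : Disjoint {h : Fin d → ℝ | a < ‖h‖ ∧ ‖h‖ < min b 1}
          {h : Fin d → ℝ | (a < ‖h‖ ∧ ‖h‖ < b) ∧ 1 ≤ ‖h‖} := by
        rw [Set.disjoint_left]
        rintro h ⟨_, h2⟩ ⟨_, h4⟩
        have := lt_of_lt_of_le h2 (min_le_right b 1)
        linarith
      have hP2le : ‖∫ h in {h : Fin d → ℝ | (a < ‖h‖ ∧ ‖h‖ < b) ∧ 1 ≤ ‖h‖}, Φ h‖ ≤ J :=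
        hJtail _ hP2m (fun h hh => hh.2)
      have hP1le : ‖∫ h in {h : Fin d → ℝ | a < ‖h‖ ∧ ‖h‖ < min b 1}, Φ h‖ ≤ 2*T' + J := by
        rcases le_or_gt (min b 1) a with hb'a | hab'
        · have hempty : {h : Fin d → ℝ | a < ‖h‖ ∧ ‖h‖ < min b 1} = ∅ := by
            ext h
            simp only [Set.mem_setOf_eq, Set.mem_empty_iff_false, iff_false, not_and, not_lt]
            intro h1; linarith
          rw [hempty, setIntegral_empty, norm_zero]; linarith
        · have hb'1 : min b 1 ≤ 1 := min_le_right _ _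
          have hb'0 : 0 < min b 1 := lt_trans ha hab'
          have ha1 : a < 1 := lt_of_lt_of_le hab' hb'1
          have h1b' : 1 ≤ 1 / min b 1 := one_le_one_div hb'0 hb'1
          have h1a : 1 ≤ 1 / a := one_le_one_div ha ha1.le
          have hbb'aa : 1 / min b 1 ≤ 1 / a := one_div_le_one_div_of_le ha hab'.le
          have hMidm : MeasurableSet {h : Fin d → ℝ | min b 1 ≤ ‖h‖ ∧ ‖h‖ < 1 / min b 1} :=
            hmeasLeLt _ _
          have hOutm : MeasurableSet {h : Fin d → ℝ | 1 / min b 1 ≤ ‖h‖ ∧ ‖h‖ < 1 / a} :=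
            hmeasLeLt _ _
          have hIMid : IntegrableOn Φ {h : Fin d → ℝ | min b 1 ≤ ‖h‖ ∧ ‖h‖ < 1 / min b 1} :=
            hIntOn a ha _ hMidm (fun h hh => le_trans hab'.le hh.1)
          have hIOut : IntegrableOn Φ {h : Fin d → ℝ | 1 / min b 1 ≤ ‖h‖ ∧ ‖h‖ < 1 / a} :=
            hIntOn a ha _ hOutm (fun h hh => le_trans (le_trans ha1.le h1b') hh.1)
          have hdecomp : {h : Fin d → ℝ | a < ‖h‖ ∧ ‖h‖ < 1 / a}
              = ({h : Fin d → ℝ | a < ‖h‖ ∧ ‖h‖ < min b 1}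
                  ∪ {h : Fin d → ℝ | min b 1 ≤ ‖h‖ ∧ ‖h‖ < 1 / min b 1})
                ∪ {h : Fin d → ℝ | 1 / min b 1 ≤ ‖h‖ ∧ ‖h‖ < 1 / a} := by
            ext h
            simp only [Set.mem_setOf_eq, Set.mem_union]
            constructor
            · rintro ⟨h1, h2⟩
              rcases lt_or_ge ‖h‖ (min b 1) with hc1 | hc1
              · exact Or.inl (Or.inl ⟨h1, hc1⟩)
              · rcases lt_or_ge ‖h‖ (1 / min b 1) with hc2 | hc2
                · exact Or.inl (Or.inr ⟨hc1, hc2⟩)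
                · exact Or.inr ⟨hc2, h2⟩
            · rintro ((⟨h1, h2⟩ | ⟨h1, h2⟩) | ⟨h1, h2⟩)
              · exact ⟨h1, lt_of_lt_of_le h2 (le_trans hb'1 h1a)⟩
              · exact ⟨lt_of_lt_of_le hab' h1, lt_of_lt_of_le h2 hbb'aa⟩
              · exact ⟨lt_of_lt_of_le (lt_of_lt_of_le ha1 h1b') h1, h2⟩
          have hd1 : Disjoint {h : Fin d → ℝ | a < ‖h‖ ∧ ‖h‖ < min b 1}
              {h : Fin d → ℝ | min b 1 ≤ ‖h‖ ∧ ‖h‖ < 1 / min b 1} := by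
            rw [Set.disjoint_left]
            rintro h ⟨_, h2⟩ ⟨h3, _⟩
            linarith
          have hd2 : Disjoint ({h : Fin d → ℝ | a < ‖h‖ ∧ ‖h‖ < min b 1}
              ∪ {h : Fin d → ℝ | min b 1 ≤ ‖h‖ ∧ ‖h‖ < 1 / min b 1})
              {h : Fin d → ℝ | 1 / min b 1 ≤ ‖h‖ ∧ ‖h‖ < 1 / a} := by
            rw [Set.disjoint_left]
            rintro h (⟨_, h2⟩ | ⟨_, h2⟩) ⟨h3, _⟩
            · have := lt_of_lt_of_le h2 hb'1
              linarith [le_trans h1b' h3]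
            · linarith
          have heq : (∫ h in {h : Fin d → ℝ | a < ‖h‖ ∧ ‖h‖ < 1 / a}, Φ h)
              = (∫ h in {h : Fin d → ℝ | a < ‖h‖ ∧ ‖h‖ < min b 1}, Φ h)
                + (∫ h in {h : Fin d → ℝ | min b 1 ≤ ‖h‖ ∧ ‖h‖ < 1 / min b 1}, Φ h)
                + ∫ h in {h : Fin d → ℝ | 1 / min b 1 ≤ ‖h‖ ∧ ‖h‖ < 1 / a}, Φ h := by
            rw [hdecomp, setIntegral_union hd2 hOutm (hIP1.union hIMid) hIOut,
              setIntegral_union hd1 hMidm hIP1 hIMid]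
          have hMidEq : (∫ h in {h : Fin d → ℝ | min b 1 ≤ ‖h‖ ∧ ‖h‖ < 1 / min b 1}, Φ h)
              = ∫ h in {h : Fin d → ℝ | min b 1 < ‖h‖ ∧ ‖h‖ < 1 / min b 1}, Φ h := by
            apply setIntegral_congr_set
            apply measure_symmDiff_eq_zero_iff.mp
            apply measure_mono_null (t := Metric.sphere (0 : Fin d → ℝ) (min b 1))
            · intro h hh
              rw [Set.mem_symmDiff] at hh
              rw [mem_sphere_zero_iff_norm]
              rcases hh with ⟨⟨h1, h2⟩, hn⟩ | ⟨⟨h1, h2⟩, hn⟩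
              · rcases lt_or_eq_of_le h1 with hlt | heq2
                · exact absurd ⟨hlt, h2⟩ hn
                · exact heq2.symm
              · exact absurd ⟨h1.le, h2⟩ hn
            · exact Measure.addHaar_sphere volume 0 _
          have hP1eq : (∫ h in {h : Fin d → ℝ | a < ‖h‖ ∧ ‖h‖ < min b 1}, Φ h)
              = (∫ h in {h : Fin d → ℝ | a < ‖h‖ ∧ ‖h‖ < 1 / a}, Φ h)
                - (∫ h in {h : Fin d → ℝ | min b 1 < ‖h‖ ∧ ‖h‖ < 1 / min b 1}, Φ h)
                - ∫ h in {h : Fin d → ℝ | 1 / min b 1 ≤ ‖h‖ ∧ ‖h‖ < 1 / a}, Φ h := by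
            rw [← hMidEq, heq]; ring
          rw [hP1eq]
          have hOutle : ‖∫ h in {h : Fin d → ℝ | 1 / min b 1 ≤ ‖h‖ ∧ ‖h‖ < 1 / a}, Φ h‖ ≤ J :=
            hJtail _ hOutm (fun h hh => le_trans h1b' hh.1)
          calc ‖(∫ h in {h : Fin d → ℝ | a < ‖h‖ ∧ ‖h‖ < 1 / a}, Φ h)
                - (∫ h in {h : Fin d → ℝ | min b 1 < ‖h‖ ∧ ‖h‖ < 1 / min b 1}, Φ h)
                - ∫ h in {h : Fin d → ℝ | 1 / min b 1 ≤ ‖h‖ ∧ ‖h‖ < 1 / a}, Φ h‖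
              ≤ ‖(∫ h in {h : Fin d → ℝ | a < ‖h‖ ∧ ‖h‖ < 1 / a}, Φ h)
                - (∫ h in {h : Fin d → ℝ | min b 1 < ‖h‖ ∧ ‖h‖ < 1 / min b 1}, Φ h)‖
                + ‖∫ h in {h : Fin d → ℝ | 1 / min b 1 ≤ ‖h‖ ∧ ‖h‖ < 1 / a}, Φ h‖ :=
                norm_sub_le _ _
            _ ≤ ‖∫ h in {h : Fin d → ℝ | a < ‖h‖ ∧ ‖h‖ < 1 / a}, Φ h‖
                + ‖∫ h in {h : Fin d → ℝ | min b 1 < ‖h‖ ∧ ‖h‖ < 1 / min b 1}, Φ h‖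
                + ‖∫ h in {h : Fin d → ℝ | 1 / min b 1 ≤ ‖h‖ ∧ ‖h‖ < 1 / a}, Φ h‖ :=
                add_le_add_left (norm_sub_le _ _) _
            _ ≤ T' + T' + J := by
                refine add_le_add (add_le_add (hST a ha) (hST (min b 1) hb'0)) hOutle
            _ ≤ 2*T' + J := by linarith
      rw [hsplit, setIntegral_union hdisj hP2m hIP1 hIP2]
      calc ‖(∫ h in {h : Fin d → ℝ | a < ‖h‖ ∧ ‖h‖ < min b 1}, Φ h)
            + ∫ h in {h : Fin d → ℝ | (a < ‖h‖ ∧ ‖h‖ < b) ∧ 1 ≤ ‖h‖}, Φ h‖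
          ≤ ‖∫ h in {h : Fin d → ℝ | a < ‖h‖ ∧ ‖h‖ < min b 1}, Φ h‖
            + ‖∫ h in {h : Fin d → ℝ | (a < ‖h‖ ∧ ‖h‖ < b) ∧ 1 ≤ ‖h‖}, Φ h‖ :=
            norm_add_le _ _
        _ ≤ (2*T' + J) + J := add_le_add hP1le hP2le
        _ = 2*T' + 2*J := by ring
    -- dyadic set bounded above
    have hDbdd : BddAbove {a | ∃ t₁ t₂ : ℤ, t₁ ≤ t₂ ∧
        a = ‖∑ s ∈ Finset.Ioc t₁ t₂, ∫ y, dyadicPiece K ψ s x y * f y‖} := by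
      refine ⟨2*T' + 2*J + C₁ * maxFn f x, ?_⟩
      rintro a ⟨t₁, t₂, ht, rfl⟩
      rw [hDyadEq t₁ t₂]
      have hVm := hmeasLtLt ((2:ℝ)^t₁) ((2:ℝ)^(t₂-1))
      have hzp1 : (2:ℝ)^(t₁-1) < (2:ℝ)^t₁ :=
        zpow_lt_zpow_right₀ (by norm_num) (by omega)
      have hzp2 : (2:ℝ)^(t₂-1) < (2:ℝ)^t₂ :=
        zpow_lt_zpow_right₀ (by norm_num) (by omega)
      have hdisc := hDisc t₁ t₂ {h : Fin d → ℝ | (2:ℝ)^t₁ < ‖h‖ ∧ ‖h‖ < (2:ℝ)^(t₂-1)} hVm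
        (fun h h1 h2 => ⟨h1, h2⟩)
        (fun h hh => ⟨lt_trans hzp1 hh.1, lt_trans hh.2 hzp2⟩)
      have hbig : ‖∫ h, Set.indicator
          {h : Fin d → ℝ | (2:ℝ)^t₁ < ‖h‖ ∧ ‖h‖ < (2:ℝ)^(t₂-1)} Φ h‖ ≤ 2*T' + 2*J := by
        rw [integral_indicator hVm]
        exact hSA _ _ (zpow_pos (by norm_num) _)
      calc ‖∫ h, (chiFn ψ t₁ t₂ h : ℂ) * Φ h‖
          ≤ ‖∫ h, Set.indicator {h : Fin d → ℝ | (2:ℝ)^t₁ < ‖h‖ ∧ ‖h‖ < (2:ℝ)^(t₂-1)} Φ h‖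
            + ‖(∫ h, Set.indicator
                {h : Fin d → ℝ | (2:ℝ)^t₁ < ‖h‖ ∧ ‖h‖ < (2:ℝ)^(t₂-1)} Φ h)
              - ∫ h, (chiFn ψ t₁ t₂ h : ℂ) * Φ h‖ := by
            rw [norm_sub_rev]
            exact norm_le_insert' _ _
        _ ≤ (2*T' + 2*J) + C₁ * maxFn f x := add_le_add hbig hdisc
    -- main estimate, elementwise
    apply Real.sSup_le _ hRHS0
    rintro a ⟨δ, hδ, rfl⟩
    rcases le_or_gt 1 δ with hδ1 | hδ1
    · have hempty : {h : Fin d → ℝ | δ < ‖h‖ ∧ ‖h‖ < 1 / δ} = ∅ := by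
        ext h
        simp only [Set.mem_setOf_eq, Set.mem_empty_iff_false, iff_false, not_and, not_lt]
        intro h1
        have : 1/δ ≤ 1 := by
          rw [div_le_one hδ]; exact hδ1
        linarith
      rw [hempty, setIntegral_empty, norm_zero]
      exact hRHS0
    · -- δ < 1
      set t₁ : ℤ := Int.log 2 δ + 1 with ht₁def
      set t₂ : ℤ := Int.log 2 (1/δ) + 1 with ht₂def
      have hp1 : (2:ℝ)^(t₁ - 1) ≤ δ := by
        have := Int.zpow_log_le_self (b := 2) (by norm_num) hδ
        rw [ht₁def]
        simpa using this
      have hp2 : δ < (2:ℝ)^t₁ := by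
        have := Int.lt_zpow_succ_log_self (b := 2) (by norm_num) δ
        rw [ht₁def]
        simpa using this
      have hinvδ : (0:ℝ) < 1/δ := by positivity
      have hp3 : (2:ℝ)^(t₂ - 1) ≤ 1/δ := by
        have := Int.zpow_log_le_self (b := 2) (by norm_num) hinvδ
        rw [ht₂def]
        simpa using this
      have hp4 : 1/δ < (2:ℝ)^t₂ := by
        have := Int.lt_zpow_succ_log_self (b := 2) (by norm_num) (1/δ)
        rw [ht₂def]
        simpa using this
      have ht12 : t₁ ≤ t₂ := by
        have ht1 : t₁ ≤ 0 := by
          by_contra hcon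
          push_neg at hcon
          have : ((2:ℝ)^(0:ℤ)) ≤ (2:ℝ)^(t₁ - 1) :=
            zpow_le_zpow_right₀ (by norm_num) (by omega)
          simp only [zpow_zero] at this
          linarith
        have ht2 : 1 ≤ t₂ := by
          by_contra hcon
          push_neg at hcon
          have h1δ : (1:ℝ) < 1/δ := by
            rw [lt_div_iff₀ hδ]; linarith
          have : (2:ℝ)^t₂ ≤ (2:ℝ)^(0:ℤ) :=
            zpow_le_zpow_right₀ (by norm_num) (by omega)
          simp only [zpow_zero] at this
          linarith
        omega
      have hEm : MeasurableSet {h : Fin d → ℝ | δ < ‖h‖ ∧ ‖h‖ < 1 / δ} := hmeasLtLt δ (1/δ)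
      have hdisc := hDisc t₁ t₂ {h : Fin d → ℝ | δ < ‖h‖ ∧ ‖h‖ < 1 / δ} hEm
        (fun h hA hB => ⟨lt_trans hp2 hA, lt_of_lt_of_le hB hp3⟩)
        (fun h hh => ⟨lt_of_le_of_lt hp1 hh.1, lt_trans hh.2 hp4⟩)
      calc ‖∫ h in {h : Fin d → ℝ | δ < ‖h‖ ∧ ‖h‖ < 1 / δ}, Φ h‖
          ≤ ‖∫ h, (chiFn ψ t₁ t₂ h : ℂ) * Φ h‖ + C₁ * maxFn f x := by
            rw [← integral_indicator hEm]
            refine le_trans (norm_le_insert' _ _) (add_le_add_right hdisc _)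
        _ ≤ maxTruncDyadic K ψ f x + C₁ * maxFn f x := by
            apply add_le_add_left
            rw [← hDyadEq t₁ t₂]
            exact le_csSup hDbdd ⟨t₁, t₂, ht12, rfl⟩
        _ ≤ (C₁ + 1) * (maxFn f x + maxTruncDyadic K ψ f x) := by nlinarith
  · rw [Real.sSup_of_not_bddAbove hTb]
    exact hRHS0
end
end

section
/- Let K be a closed, bounded, convex, symmetric subset of R^n with nonempty interior, and let E_K denote its John ellipsoid (the solid ellipsoid of largest volume contained in K, centered at the origin by symmetry). Then E_K ⊂ K ⊂ √n · E_K. -/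
open MeasureTheory
open scoped Pointwise

noncomputable section

def IsEllipsoid {n : ℕ} (S : Set (EuclideanSpace ℝ (Fin n))) : Prop :=
  ∃ A : EuclideanSpace ℝ (Fin n) ≃ₗ[ℝ] EuclideanSpace ℝ (Fin n),
    S = A '' Metric.closedBall 0 1

/-!
Applying the inverse of the linear map defining `E_K`, we may assume that `E_K` is the unit
ball `B`. If some `x ∈ K` had `‖x‖ = s > √n`, stretch `B` by `√α > 1` in the direction of `x`
and shrink it by `√β < 1` orthogonally to `x`, where `α / s² + β (1 - 1 / s²) = 1`: this is the
tangency condition that keeps the new ellipsoid inside the convex hull of `±x` and `B`, hence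
inside `K`. Its volume is `√(α β^(n-1))` times that of `B`, and Bernoulli's inequality gives
`α β^(n-1) > 1` for `α` close to `1` as soon as `s² - 1 > n - 1`, contradicting maximality.
-/

open Metric
open scoped RealInnerProductSpace

-- The point with axial coordinate `c` and squared distance `δ` to the axis lies within `1 - t`
-- of `t • (s, 0)`, hence in the convex hull of `(s, 0)` and the unit ball.
theorem exists_sq_sub_mul_add_le_sq {s α β c δ : ℝ} (hs : 1 < s) (hα : 1 ≤ α) (hαs : α < s ^ 2)
    (hβ : β * (s ^ 2 - 1) = s ^ 2 - α) (hc : 0 ≤ c) (hδ : 0 ≤ δ)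
    (h : δ * α ≤ β * (α - c ^ 2)) :
    ∃ t, 0 ≤ t ∧ t ≤ 1 ∧ (c - t * s) ^ 2 + δ ≤ (1 - t) ^ 2 := by
  have hs2 : 0 < s ^ 2 - 1 := by nlinarith
  have hh : δ * α * (s ^ 2 - 1) ≤ (s ^ 2 - α) * (α - c ^ 2) :=
    calc δ * α * (s ^ 2 - 1) ≤ β * (α - c ^ 2) * (s ^ 2 - 1) :=
          mul_le_mul_of_nonneg_right h hs2.le
      _ = (s ^ 2 - α) * (α - c ^ 2) := by rw [← hβ]; ring
  rcases le_or_gt (c * s) 1 with hcs | hcs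
  · refine ⟨0, le_rfl, zero_le_one,
      le_of_mul_le_mul_left (a := α * (s ^ 2 - 1)) ?_ (by positivity)⟩
    have hcs2 : (c * s) ^ 2 ≤ α := by nlinarith [mul_nonneg hc (by linarith : (0 : ℝ) ≤ s)]
    nlinarith [mul_nonneg (sub_nonneg.2 hα) (sub_nonneg.2 hcs2)]
  · have hcα : c ^ 2 ≤ α :=
      sub_nonneg.1 (nonneg_of_mul_nonneg_right ((by positivity : 0 ≤ δ * α * (s ^ 2 - 1)).trans hh)
        (by linarith))
    have hcs' : c < s := by nlinarith
    refine ⟨(c * s - 1) / (s ^ 2 - 1), by positivity, ?_, ?_⟩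
    · rw [div_le_one hs2]; nlinarith
    · have e1 : c - (c * s - 1) / (s ^ 2 - 1) * s = (s - c) / (s ^ 2 - 1) := by
        field_simp; ring
      have e2 : 1 - (c * s - 1) / (s ^ 2 - 1) = s * (s - c) / (s ^ 2 - 1) := by
        field_simp; ring
      rw [e1, e2, div_pow, div_pow, div_add' _ _ _ (by positivity),
        div_le_div_iff_of_pos_right (by positivity)]
      nlinarith [sq_nonneg (α - c * s)]

theorem exists_one_lt_mul_pow {k : ℕ} {s : ℝ} (h : k + 1 < s ^ 2) :
    ∃ α β : ℝ, 1 ≤ α ∧ α < s ^ 2 ∧ 0 ≤ β ∧ β * (s ^ 2 - 1) = s ^ 2 - α ∧ 1 < α * β ^ k := by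
  set m := s ^ 2 - 1
  have hk : (0 : ℝ) ≤ k := k.cast_nonneg
  have hm : 0 < m := by linarith
  set ε := (m - k) / (k + 2)
  have hε : 0 < ε := div_pos (by linarith) (by linarith)
  have hεm : ε < m := by rw [div_lt_iff₀ (by linarith)]; nlinarith
  have hkε : k * ε < m - k := by
    rw [← mul_div_assoc, div_lt_iff₀ (by linarith)]; nlinarith
  refine ⟨1 + ε, 1 - ε / m, by linarith, by linarith, ?_, ?_, ?_⟩
  · rw [sub_nonneg, div_le_one hm]; exact hεm.le
  · field_simp; ring
  · have bernoulli : 1 - k * (ε / m) ≤ (1 - ε / m) ^ k := by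
      simpa [sub_eq_add_neg] using
        one_add_mul_le_pow (a := -(ε / m)) (by rw [neg_le_neg_iff, div_le_iff₀ hm]; linarith) k
    have key : 1 < (1 + ε) * (1 - k * (ε / m)) := by
      rw [← mul_div_assoc, one_sub_div hm.ne', mul_div_assoc', lt_div_iff₀ hm]; nlinarith
    exact key.trans_le (by gcongr)

theorem Convex.mem_of_norm_sub_smul_le {F : Type*} [NormedAddCommGroup F] [NormedSpace ℝ F]
    {K : Set F} (hK : Convex ℝ K) (hball : closedBall 0 1 ⊆ K) {x y : F} (hx : x ∈ K) {t : ℝ}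
    (ht0 : 0 ≤ t) (ht1 : t ≤ 1) (h : ‖y - t • x‖ ≤ 1 - t) : y ∈ K := by
  have hmem : y - t • x ∈ (1 - t) • closedBall (0 : F) 1 := by
    rwa [smul_unitClosedBall_of_nonneg (sub_nonneg.2 ht1), mem_closedBall_zero_iff]
  obtain ⟨w, hw, hyw⟩ := hmem
  obtain rfl : y = t • x + (1 - t) • w := by
    rw [show (1 - t) • w = y - t • x from hyw]; abel
  exact hK hx (hball hw) ht0 (by linarith) (by ring)

section Stretch

variable {E : Type*} [NormedAddCommGroup E] [InnerProductSpace ℝ E]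

def stretchAlong (u : E) (a b : ℝ) : E →ₗ[ℝ] E :=
  b • LinearMap.id + (a - b) • (innerₗ E u).smulRight u

theorem stretchAlong_apply (u : E) (a b : ℝ) (z : E) :
    stretchAlong u a b z = b • z + ((a - b) * ⟪u, z⟫) • u := by
  simp [stretchAlong, mul_smul]

theorem det_stretchAlong [FiniteDimensional ℝ E] {u : E} (hu : ‖u‖ = 1) (a b : ℝ) :
    LinearMap.det (stretchAlong u a b) = a * b ^ (Module.finrank ℝ E - 1) := by
  classical
  have hpos : 0 < Module.finrank ℝ E :=
    Module.finrank_pos_iff_exists_ne_zero.2 ⟨u, by rintro rfl; simp at hu⟩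
  set i₀ : Fin (Module.finrank ℝ E) := ⟨0, hpos⟩
  have hu' : Orthonormal ℝ (({i₀} : Set _).domRestrict fun _ => u) := by
    rw [orthonormal_iff_ite]
    rintro ⟨i, rfl⟩ ⟨j, rfl⟩
    simp [hu]
  obtain ⟨v, hv⟩ := hu'.exists_orthonormalBasis_extension_of_card_eq (by simp)
  obtain rfl : v i₀ = u := hv i₀ rfl
  have hmat : LinearMap.toMatrix v.toBasis v.toBasis (stretchAlong (v i₀) a b) =
      Matrix.diagonal (Function.update (fun _ => b) i₀ a) := by
    ext i j
    rw [LinearMap.toMatrix_apply, OrthonormalBasis.coe_toBasis_repr_apply,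
      OrthonormalBasis.repr_apply_apply, OrthonormalBasis.coe_toBasis, stretchAlong_apply]
    simp only [inner_add_right, inner_smul_right, orthonormal_iff_ite.1 v.orthonormal,
      Matrix.diagonal_apply, Function.update_apply]
    split_ifs <;> simp_all
  rw [← LinearMap.det_toMatrix v.toBasis, hmat, Matrix.det_diagonal,
    Finset.prod_update_of_mem (Finset.mem_univ _)]
  simp [Finset.card_sdiff]

theorem inner_stretchAlong {u : E} (hu : ‖u‖ = 1) (a b : ℝ) (z : E) :
    ⟪u, stretchAlong u a b z⟫ = a * ⟪u, z⟫ := by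
  rw [stretchAlong_apply, inner_add_right, inner_smul_right, inner_smul_right,
    real_inner_self_eq_norm_sq, hu]
  ring

theorem norm_stretchAlong_sq {u : E} (hu : ‖u‖ = 1) (a b : ℝ) (z : E) :
    ‖stretchAlong u a b z‖ ^ 2 = b ^ 2 * ‖z‖ ^ 2 + (a ^ 2 - b ^ 2) * ⟪u, z⟫ ^ 2 := by
  rw [stretchAlong_apply, norm_add_sq_real, inner_smul_left, inner_smul_right, norm_smul,
    norm_smul, hu, real_inner_comm]
  simp only [Real.norm_eq_abs, mul_pow, sq_abs, RCLike.conj_to_real]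
  ring

theorem sq_inner_le_sq_norm {u : E} (hu : ‖u‖ = 1) (y : E) : ⟪u, y⟫ ^ 2 ≤ ‖y‖ ^ 2 := by
  simpa [hu] using sq_le_sq' (neg_le_of_abs_le (abs_real_inner_le_norm u y))
    (le_of_abs_le (abs_real_inner_le_norm u y))

section Cone

variable {K : Set E} {u : E} {s α β : ℝ}

theorem Convex.mem_of_ellipsoid_ineq_of_inner_nonneg (hK : Convex ℝ K) (hball : closedBall 0 1 ⊆ K)
    (hu : ‖u‖ = 1) (hs : 1 < s) (hsu : s • u ∈ K) (hα : 1 ≤ α) (hαs : α < s ^ 2)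
    (hβ : β * (s ^ 2 - 1) = s ^ 2 - α) {y : E} (hy0 : 0 ≤ ⟪u, y⟫)
    (hy : (‖y‖ ^ 2 - ⟪u, y⟫ ^ 2) * α ≤ β * (α - ⟪u, y⟫ ^ 2)) : y ∈ K := by
  obtain ⟨t, ht0, ht1, ht⟩ := exists_sq_sub_mul_add_le_sq hs hα hαs hβ hy0
    (sub_nonneg.2 (sq_inner_le_sq_norm hu y)) hy
  refine hK.mem_of_norm_sub_smul_le hball hsu ht0 ht1 ?_
  have hnorm : ‖y - t • s • u‖ ^ 2 = (⟪u, y⟫ - t * s) ^ 2 + (‖y‖ ^ 2 - ⟪u, y⟫ ^ 2) := by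
    rw [norm_sub_sq_real, smul_smul, inner_smul_right, norm_smul, hu, real_inner_comm,
      Real.norm_eq_abs, mul_pow, sq_abs]
    ring
  exact (pow_le_pow_iff_left₀ (norm_nonneg _) (by linarith) two_ne_zero).1 (hnorm ▸ ht)

theorem Convex.mem_of_ellipsoid_ineq (hK : Convex ℝ K) (hsymm : ∀ x ∈ K, -x ∈ K)
    (hball : closedBall 0 1 ⊆ K) (hu : ‖u‖ = 1) (hs : 1 < s) (hsu : s • u ∈ K) (hα : 1 ≤ α)
    (hαs : α < s ^ 2) (hβ : β * (s ^ 2 - 1) = s ^ 2 - α) {y : E}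
    (hy : (‖y‖ ^ 2 - ⟪u, y⟫ ^ 2) * α ≤ β * (α - ⟪u, y⟫ ^ 2)) : y ∈ K := by
  rcases le_total 0 ⟪u, y⟫ with hy0 | hy0
  · exact hK.mem_of_ellipsoid_ineq_of_inner_nonneg hball hu hs hsu hα hαs hβ hy0 hy
  · have hneg : -y ∈ K := hK.mem_of_ellipsoid_ineq_of_inner_nonneg hball hu hs hsu hα hαs hβ
      (by simpa [inner_neg_right] using hy0) (by simpa [inner_neg_right, norm_neg] using hy)
    simpa using hsymm _ hneg

theorem Convex.image_stretchAlong_subset (hK : Convex ℝ K) (hsymm : ∀ x ∈ K, -x ∈ K)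
    (hball : closedBall 0 1 ⊆ K) (hu : ‖u‖ = 1) (hs : 1 < s) (hsu : s • u ∈ K) (hα : 1 ≤ α)
    (hαs : α < s ^ 2) (hβ0 : 0 ≤ β) (hβ : β * (s ^ 2 - 1) = s ^ 2 - α) :
    stretchAlong u √α √β '' closedBall 0 1 ⊆ K := by
  rintro _ ⟨z, hz, rfl⟩
  refine hK.mem_of_ellipsoid_ineq hsymm hball hu hs hsu hα hαs hβ ?_
  have hz1 : ‖z‖ ^ 2 ≤ 1 := pow_le_one₀ (norm_nonneg z) (mem_closedBall_zero_iff.1 hz)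
  rw [norm_stretchAlong_sq hu, inner_stretchAlong hu, mul_pow, Real.sq_sqrt hβ0,
    Real.sq_sqrt (by linarith)]
  nlinarith [mul_le_mul_of_nonneg_left hz1 (mul_nonneg (by linarith : 0 ≤ α) hβ0)]

end Cone

theorem norm_le_sqrt_finrank_of_abs_det_le_one [FiniteDimensional ℝ E] {K : Set E}
    (hK : Convex ℝ K) (hsymm : ∀ x ∈ K, -x ∈ K) (hball : closedBall 0 1 ⊆ K)
    (hmax : ∀ T : E →ₗ[ℝ] E, T '' closedBall 0 1 ⊆ K → |LinearMap.det T| ≤ 1)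
    {x : E} (hx : x ∈ K) : ‖x‖ ≤ √(Module.finrank ℝ E) := by
  by_contra! hlt
  set s := ‖x‖
  have hx0 : x ≠ 0 := norm_pos_iff.1 ((Real.sqrt_nonneg _).trans_lt hlt)
  set u := s⁻¹ • x
  have hu : ‖u‖ = 1 := norm_smul_inv_norm hx0
  have hsu : s • u = x := smul_inv_smul₀ (norm_ne_zero_iff.2 hx0) x
  have hpos : 0 < Module.finrank ℝ E := Module.finrank_pos_iff_exists_ne_zero.2 ⟨x, hx0⟩
  set k := Module.finrank ℝ E - 1
  have hk : (k : ℝ) + 1 < s ^ 2 := by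
    rwa [Nat.cast_pred hpos, sub_add_cancel, ← Real.sqrt_lt' (norm_pos_iff.2 hx0)]
  have hs : 1 < s := by nlinarith [k.cast_nonneg (α := ℝ), norm_nonneg x]
  obtain ⟨α, β, hα, hαs, hβ0, hβ, hvol⟩ := exists_one_lt_mul_pow hk
  have hdet := hmax _ (hK.image_stretchAlong_subset hsymm hball hu hs (hsu ▸ hx) hα hαs hβ0 hβ)
  rw [det_stretchAlong hu, abs_of_nonneg (by positivity)] at hdet
  have hsq : (√α * √β ^ k) ^ 2 = α * β ^ k := by
    rw [mul_pow, ← pow_mul, mul_comm k, pow_mul, Real.sq_sqrt (by linarith), Real.sq_sqrt hβ0]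
  nlinarith [pow_le_one₀ (n := 2) (by positivity) hdet]

end Stretch

theorem abs_det_le_one_of_forall_volume_le {n : ℕ} {K : Set (EuclideanSpace ℝ (Fin n))}
    (A : EuclideanSpace ℝ (Fin n) ≃ₗ[ℝ] EuclideanSpace ℝ (Fin n))
    (hmax : ∀ E' : Set (EuclideanSpace ℝ (Fin n)),
      IsEllipsoid E' → E' ⊆ K → volume E' ≤ volume (A '' closedBall 0 1))
    {T : EuclideanSpace ℝ (Fin n) →ₗ[ℝ] EuclideanSpace ℝ (Fin n)}
    (hT : T '' closedBall 0 1 ⊆ A ⁻¹' K) : |LinearMap.det T| ≤ 1 := by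
  by_cases hT0 : LinearMap.det T = 0
  · simp [hT0]
  have hsub : (A.toLinearMap ∘ₗ T) '' closedBall 0 1 ⊆ K := by
    rw [LinearMap.coe_comp, Set.image_comp]
    exact Set.image_subset_iff.2 hT
  have hvol : volume ((A.toLinearMap ∘ₗ T) '' closedBall 0 1) ≤
      volume (A.toLinearMap '' closedBall 0 1) :=
    hmax _ ⟨(T.equivOfDetNeZero hT0).trans A, rfl⟩ hsub
  rw [Measure.addHaar_image_linearMap, Measure.addHaar_image_linearMap, LinearMap.det_comp,
    abs_mul, ENNReal.ofReal_mul (abs_nonneg _), mul_comm (ENNReal.ofReal _), mul_assoc] at hvol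
  have hA0 : ENNReal.ofReal |LinearMap.det A.toLinearMap| ≠ 0 := by
    simpa using A.isUnit_det'.ne_zero
  have hB0 : volume (closedBall (0 : EuclideanSpace ℝ (Fin n)) 1) ≠ 0 :=
    (measure_closedBall_pos volume _ one_pos).ne'
  have hBtop : volume (closedBall (0 : EuclideanSpace ℝ (Fin n)) 1) ≠ ⊤ :=
    measure_closedBall_lt_top.ne
  rw [← ENNReal.ofReal_le_one]
  refine (ENNReal.mul_le_mul_iff_left (mul_ne_zero hA0 hB0)
    (ENNReal.mul_ne_top ENNReal.ofReal_ne_top hBtop)).1 ?_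
  rwa [one_mul]

theorem stmt17_general {n : ℕ} (K EK : Set (EuclideanSpace ℝ (Fin n)))
    (hconv : Convex ℝ K)
    (hsymm : ∀ x ∈ K, -x ∈ K)
    (hEK : IsEllipsoid EK) (hEKsub : EK ⊆ K)
    (hEKmax : ∀ E' : Set (EuclideanSpace ℝ (Fin n)),
      IsEllipsoid E' → E' ⊆ K → volume E' ≤ volume EK) :
    EK ⊆ K ∧ K ⊆ (Real.sqrt n) • EK := by
  obtain ⟨A, rfl⟩ := hEK
  refine ⟨hEKsub, fun x hx => ?_⟩
  have hAx : ‖A.symm x‖ ≤ √n := by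
    simpa [finrank_euclideanSpace_fin] using
      norm_le_sqrt_finrank_of_abs_det_le_one (K := A ⁻¹' K)
        (hconv.linear_preimage A.toLinearMap) (fun y hy => by simpa using hsymm _ hy)
        (Set.image_subset_iff.1 hEKsub)
        (fun _ hT => abs_det_le_one_of_forall_volume_le A hEKmax hT)
        (x := A.symm x) (by simpa using hx)
  rw [← image_smul_set]
  refine ⟨A.symm x, ?_, by simp⟩
  rwa [smul_unitClosedBall_of_nonneg (Real.sqrt_nonneg _), mem_closedBall_zero_iff]

/-- John's theorem for symmetric convex bodies: if `K ⊆ ℝ^n` is closed, bounded, convex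
and symmetric with nonempty interior, and `E_K ⊆ K` is an ellipsoid of maximal volume
among the ellipsoids contained in `K`, then `E_K ⊆ K ⊆ √n · E_K`. -/
theorem stmt17 {n : ℕ} (hn : 0 < n) (K EK : Set (EuclideanSpace ℝ (Fin n)))
    (hclosed : IsClosed K) (hbdd : Bornology.IsBounded K) (hconv : Convex ℝ K)
    (hsymm : ∀ x ∈ K, -x ∈ K) (hint : (interior K).Nonempty)
    (hEK : IsEllipsoid EK) (hEKsub : EK ⊆ K)
    (hEKmax : ∀ E' : Set (EuclideanSpace ℝ (Fin n)),
      IsEllipsoid E' → E' ⊆ K → volume E' ≤ volume EK) :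
    EK ⊆ K ∧ K ⊆ (Real.sqrt n) • EK :=
  stmt17_general K EK hconv hsymm hEK hEKsub hEKmax
end
end
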